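/- arXiv:2212.09665 — 5 statements merged into one kernel-verified Lean document; each statement's English description precedes it below -/
import Mathlib

section
/- Let G be an infinite nilpotent profinite group. Then the center Z(G) of G is infinite. -/
/-!
If the center `Z` of a profinite group `G` is finite, then `Z \ {1}` is closed, so some open
normal subgroup `N` meets `Z` trivially. In a nilpotent group a normal subgroup meeting the
center trivially is trivial (if `x ∈ N` lies in the `(n+1)`-st term of the upper central series,
its commutators lie in `N` and in the `n`-th term), so `{1} = N` is open, `G` is discrete, and
being compact it is finite.
-/

open Subgroup
open scoped commutatorElement

namespace Subgroup

variable {G : Type*} [Group G]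

theorem inf_upperCentralSeries_eq_bot_of_inf_center_eq_bot {N : Subgroup G} [N.Normal]
    (hN : N ⊓ center G = ⊥) (n : ℕ) : N ⊓ upperCentralSeries G n = ⊥ := by
  induction n with
  | zero => simp
  | succ n ih =>
    rw [eq_bot_iff] at hN ⊢
    rintro x ⟨hxN, hxZ⟩
    refine hN ⟨hxN, mem_center_iff.mpr fun y => ?_⟩
    have hcomm : ⁅x, y⁆ ∈ N ⊓ upperCentralSeries G n :=
      ⟨commutator_le_left N ⊤ (commutator_mem_commutator hxN (mem_top y)),
        mem_upperCentralSeries_succ_iff.mp hxZ y⟩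
    rw [ih, mem_bot, commutatorElement_eq_one_iff_mul_comm] at hcomm
    exact hcomm.symm

theorem eq_bot_of_inf_center_eq_bot [Group.IsNilpotent G] {N : Subgroup G} [N.Normal]
    (hN : N ⊓ center G = ⊥) : N = ⊥ := by
  obtain ⟨n, hn⟩ := Group.IsNilpotent.nilpotent' (G := G)
  simpa [hn] using inf_upperCentralSeries_eq_bot_of_inf_center_eq_bot hN n

end Subgroup

namespace ProfiniteGrp

variable {G : Type*} [Group G] [TopologicalSpace G] [IsTopologicalGroup G] [CompactSpace G]
  [TotallyDisconnectedSpace G]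

theorem exists_openNormalSubgroup_inf_eq_bot_of_finite [T1Space G]
    {H : Subgroup G} (hH : (H : Set G).Finite) :
    ∃ N : OpenNormalSubgroup G, N.toSubgroup ⊓ H = ⊥ := by
  obtain ⟨N, hN⟩ := exist_openNormalSubgroup_sub_open_nhds_of_one
    (hH.sdiff (t := {1})).isClosed.isOpen_compl (by simp)
  refine ⟨N, eq_bot_iff.mpr fun x ⟨hxN, hxH⟩ => ?_⟩
  by_contra hx
  exact hN hxN ⟨hxH, hx⟩

theorem finite_of_isNilpotent_of_finite_center [T1Space G] [Group.IsNilpotent G]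
    (hZ : (center G : Set G).Finite) : Finite G := by
  obtain ⟨N, hN⟩ := exists_openNormalSubgroup_inf_eq_bot_of_finite hZ
  have hbot : N.toSubgroup = ⊥ := eq_bot_of_inf_center_eq_bot hN
  have : DiscreteTopology G :=
    discreteTopology_of_isOpen_singleton_one (by simpa [← coe_bot, ← hbot] using N.isOpen)
  exact finite_of_compact_of_discrete

end ProfiniteGrp

theorem stmt4 {G : Type*} [Group G] [TopologicalSpace G] [IsTopologicalGroup G]
    [CompactSpace G] [T2Space G] [TotallyDisconnectedSpace G]
    (hinf : Infinite G) (hnilp : Group.IsNilpotent G) :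
    (Subgroup.center G : Set G).Infinite := fun hZ =>
  not_finite_iff_infinite.mpr hinf (ProfiniteGrp.finite_of_isNilpotent_of_finite_center hZ)
end

section
/- Let k ≥ 1 and let G be a profinite group. Then the closed subgroup of G topologically generated by the set 𝒰_k(G) of uniform k-step commutators equals γ_k(G). -/
/-- The commutator `[a,b] = a⁻¹ * b⁻¹ * a * b`. -/
def pcomm {G : Type*} [Group G] (a b : G) : G := a⁻¹ * b⁻¹ * a * b

/-- Left-normed commutator `[x₁,…,xₙ]` of a list of group elements
(equal to `1` for the empty list). -/
def lnc {G : Type*} [Group G] : List G → G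
  | [] => 1
  | a :: t => t.foldl pcomm a

/-- `p` divides the order of the image of `x` in `G ⧸ N`. -/
def pDvdOrderInQuot {G : Type*} [Group G] (N : Subgroup G) [N.Normal] (x : G) (p : ℕ) :
    Prop :=
  p ∣ orderOf (QuotientGroup.mk' N x)

/-- `π(x)`: the set of primes dividing the order of the image of `x` in some
quotient of `G` by an open normal subgroup (i.e. in some finite continuous
quotient, when `G` is profinite). -/
def primesOf {G : Type*} [Group G] [TopologicalSpace G] (x : G) : Set ℕ :=
  {p | p.Prime ∧ ∃ (N : Subgroup G) (hN : N.Normal), IsOpen (N : Set G) ∧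
    @pDvdOrderInQuot G _ N hN x p}

/-- `g` is a uniform `k`-step commutator: `g = [x₁,…,x_k]` (left-normed) with
`π(x₁) = ⋯ = π(x_k)`. -/
def IsUniformCommutator {G : Type*} [Group G] [TopologicalSpace G] (k : ℕ) (g : G) : Prop :=
  ∃ x : Fin k → G, (∀ i j, primesOf (x i) = primesOf (x j)) ∧ g = lnc (List.ofFn x)

/-!
A left-normed commutator of length `k` lies in `γ_k`, which gives one inclusion. For the other,
`⟨𝒰_k(G)⟩` is normal and a closed subgroup of a profinite group is the intersection of the open
subgroups containing it, so it suffices to show `γ_k(G) ≤ M` for every open normal `M ⊇ 𝒰_k(G)`.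
In the finite group `Q = G ⧸ M` a nontrivial `p`-element lifts, by compactness, to some `x ∈ G`
with `π(x) = {p}`; hence left-normed commutators of `k` `p`-elements of `Q` vanish. Then the
subgroup generated by the `p`-elements is nilpotent, so the `p`-elements form a normal subgroup
`T_p`, and `T_p`, `T_q` commute for `p ≠ q`. A left-normed commutator of elements of prime-power
order therefore vanishes as soon as two primes occur, and otherwise by the above; since such
elements generate `Q`, this forces `γ_k(Q) = 1`.
-/

open scoped commutatorElement

section LeftNormedCommutator

variable {G H : Type*} [Group G] [Group H]

@[simp] lemma pcomm_one_left (a : G) : pcomm 1 a = 1 := by simp [pcomm]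

@[simp] lemma pcomm_one_right (a : G) : pcomm a 1 = 1 := by simp [pcomm]

lemma pcomm_eq_commutatorElement (a b : G) : pcomm a b = ⁅a⁻¹, b⁻¹⁆ := by
  simp [pcomm, commutatorElement_def]

lemma pcomm_eq_one_iff {a b : G} : pcomm a b = 1 ↔ Commute a b := by
  rw [pcomm_eq_commutatorElement, commutatorElement_eq_one_iff_commute, Commute.inv_inv_iff]

lemma map_pcomm (f : G →* H) (a b : G) : f (pcomm a b) = pcomm (f a) (f b) := by
  simp [pcomm]

lemma lnc_ofFn_succ {k : ℕ} (x : Fin (k + 2) → G) :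
    lnc (List.ofFn x) = pcomm (lnc (List.ofFn (Fin.init x))) (x (Fin.last _)) := by
  rw [List.ofFn_succ', List.concat_eq_append, Fin.init_def, List.ofFn_succ]
  simp [lnc, List.foldl_append]

lemma map_lnc (f : G →* H) (l : List G) : f (lnc l) = lnc (l.map f) := by
  cases l with
  | nil => exact map_one f
  | cons a t =>
    simp only [lnc, List.map_cons]
    induction t generalizing a with
    | nil => rfl
    | cons b t ih => simpa [map_pcomm] using ih (pcomm a b)

lemma map_lnc_ofFn (f : G →* H) {k : ℕ} (x : Fin k → G) :
    f (lnc (List.ofFn x)) = lnc (List.ofFn (f ∘ x)) := by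
  rw [map_lnc, List.map_ofFn]

lemma lnc_ofFn_eq_one_of_eq_one {k : ℕ} (x : Fin (k + 1) → G) {i : Fin (k + 1)} (hi : x i = 1) :
    lnc (List.ofFn x) = 1 := by
  induction k with
  | zero => rwa [Fin.fin_one_eq_zero i] at hi
  | succ k ih =>
    rw [lnc_ofFn_succ]
    induction i using Fin.lastCases with
    | last => rw [hi, pcomm_one_right]
    | cast j => rw [ih (Fin.init x) hi, pcomm_one_left]

lemma lnc_ofFn_mem (K : Subgroup G) {k : ℕ} {x : Fin (k + 1) → G} (hx : ∀ i, x i ∈ K) :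
    lnc (List.ofFn x) ∈ K := by
  induction k with
  | zero => exact hx 0
  | succ k ih =>
    have ha := ih fun i => hx (Fin.castSucc i)
    have hb := hx (Fin.last _)
    rw [lnc_ofFn_succ, pcomm]
    exact mul_mem (mul_mem (mul_mem (inv_mem ha) (inv_mem hb)) ha) hb

lemma lnc_ofFn_mem_lowerCentralSeries {k : ℕ} (x : Fin (k + 1) → G) :
    lnc (List.ofFn x) ∈ (⊤ : Subgroup G).lowerCentralSeries k := by
  induction k with
  | zero => trivial
  | succ k ih =>
    rw [lnc_ofFn_succ, pcomm_eq_commutatorElement]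
    exact Subgroup.commutator_mem_commutator (inv_mem (ih _)) trivial

lemma lnc_ofFn_eq_one_or_forall_mem {ι : Type*} (T : ι → Subgroup G)
    (hT : Pairwise fun i j => ∀ a ∈ T i, ∀ b ∈ T j, Commute a b) {k : ℕ} (r : Fin (k + 1) → ι)
    (x : Fin (k + 1) → G) (hx : ∀ i, x i ∈ T (r i)) :
    lnc (List.ofFn x) = 1 ∨ ∀ i, x i ∈ T (r 0) := by
  induction k with
  | zero => exact Or.inr fun i => Fin.fin_one_eq_zero i ▸ hx i
  | succ k ih =>
    rw [lnc_ofFn_succ]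
    rcases ih (Fin.init r) (Fin.init x) (fun i => hx _) with h | h
    · exact Or.inl (by rw [h, pcomm_one_left])
    by_cases hr : r (Fin.last _) = r 0
    · exact Or.inr (Fin.lastCases (hr ▸ hx _) h)
    · exact Or.inl (pcomm_eq_one_iff.mpr (hT (Ne.symm hr) _ (lnc_ofFn_mem _ h) _ (hx _)))

end LeftNormedCommutator

lemma Subgroup.mem_center_of_commute_generators {G : Type*} [Group G] {S : Set G}
    (hS : Subgroup.closure S = ⊤) {z : G} (hz : ∀ s ∈ S, Commute s z) : z ∈ Subgroup.center G := by
  rw [← Subgroup.centralizer_univ, ← Subgroup.coe_top, ← hS, Subgroup.centralizer_closure,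
    Subgroup.mem_centralizer_iff]
  exact hz

lemma Subgroup.lowerCentralSeries_le_of_quotient_eq_bot {G : Type*} [Group G] (N : Subgroup G)
    [N.Normal] {n : ℕ} (h : (⊤ : Subgroup (G ⧸ N)).lowerCentralSeries n = ⊥) :
    (⊤ : Subgroup G).lowerCentralSeries n ≤ N := by
  rw [← QuotientGroup.ker_mk' N, ← Subgroup.map_eq_bot_iff, Subgroup.map_lowerCentralSeries,
    ← le_bot_iff, ← h]
  exact Subgroup.lowerCentralSeries_mono n le_top

theorem lowerCentralSeries_eq_bot_of_lnc_eq_one {G : Type*} [Group G] {S : Set G} {k : ℕ}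
    (hS : Subgroup.closure S = ⊤)
    (h : ∀ x : Fin (k + 1) → G, (∀ i, x i ∈ S) → lnc (List.ofFn x) = 1) :
    (⊤ : Subgroup G).lowerCentralSeries k = ⊥ := by
  induction k generalizing G with
  | zero =>
    rw [Subgroup.lowerCentralSeries_zero, ← hS, Subgroup.closure_eq_bot_iff]
    exact fun s hs => h (fun _ => s) fun _ => hs
  | succ k ih =>
    have central : ∀ x : Fin (k + 1) → G, (∀ i, x i ∈ S) →
        lnc (List.ofFn x) ∈ Subgroup.center G := by
      refine fun x hx => Subgroup.mem_center_of_commute_generators hS fun s hs => ?_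
      have hsnoc := h (Fin.snoc x s) (Fin.lastCases (by simpa using hs) (by simpa using hx))
      rw [lnc_ofFn_succ, Fin.init_snoc, Fin.snoc_last, pcomm_eq_one_iff] at hsnoc
      exact hsnoc.symm
    let π := QuotientGroup.mk' (Subgroup.center G)
    refine Subgroup.lowerCentralSeries_succ_eq_bot _
      (Subgroup.lowerCentralSeries_le_of_quotient_eq_bot _ (ih (S := π '' S) ?_ ?_))
    · rw [← MonoidHom.map_closure, hS,
        Subgroup.map_top_of_surjective _ (QuotientGroup.mk'_surjective _)]
    · intro y hy
      choose x hxS hxy using hy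
      rw [show y = π ∘ x from funext fun i => (hxy i).symm, ← map_lnc_ofFn,
        QuotientGroup.mk'_apply, QuotientGroup.eq_one_iff]
      exact central x hxS

def IsPElement {G : Type*} [Group G] (p : ℕ) (x : G) : Prop := ∃ n, orderOf x = p ^ n

section PElement

variable {G : Type*} [Group G] {p : ℕ}

lemma IsPElement.of_orderOf_dvd_pow (hp : p.Prime) {x : G} {n : ℕ} (h : orderOf x ∣ p ^ n) :
    IsPElement p x := by
  obtain ⟨m, -, hm⟩ := (Nat.dvd_prime_pow hp).mp h
  exact ⟨m, hm⟩

lemma IsPElement.of_orderOf_dvd {H : Type*} [Group H] (hp : p.Prime) {x : G} {y : H}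
    (hx : IsPElement p x) (h : orderOf y ∣ orderOf x) : IsPElement p y :=
  let ⟨_, hn⟩ := hx
  .of_orderOf_dvd_pow hp (hn ▸ h)

lemma orderOf_conj (g x : G) : orderOf (g * x * g⁻¹) = orderOf x :=
  (SemiconjBy.orderOf_eq g (by group : g * x = g * x * g⁻¹ * g)).symm

lemma IsPElement.conj {x : G} (hx : IsPElement p x) (g : G) : IsPElement p (g * x * g⁻¹) := by
  rwa [IsPElement, orderOf_conj]

@[simp] lemma Subgroup.isPElement_coe {H : Subgroup G} {x : H} :
    IsPElement p (x : G) ↔ IsPElement p x := by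
  simp [IsPElement]

lemma IsPGroup.isPElement [Fact p.Prime] {H : Subgroup G} (hH : IsPGroup p H) {x : G}
    (hx : x ∈ H) : IsPElement p x :=
  Subgroup.isPElement_coe.mpr (IsPGroup.iff_orderOf.mp hH ⟨x, hx⟩)

lemma exists_isPElement_map_eq {H : Type*} [Group H] (hp : p.Prime) (f : G →* H) {a : G}
    (ha : IsOfFinOrder a) (hfa : IsPElement p (f a)) : ∃ b, IsPElement p b ∧ f b = f a := by
  obtain ⟨e, m, hpm, hem⟩ := Nat.exists_eq_pow_mul_and_not_dvd ha.orderOf_pos.ne' p hp.ne_one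
  obtain ⟨j, hj⟩ := hfa
  have hcop : m.Coprime (orderOf (f a)) :=
    hj ▸ Nat.Coprime.pow_right j (Nat.coprime_comm.mp ((Nat.Prime.coprime_iff_not_dvd hp).mpr hpm))
  obtain ⟨c, hc⟩ := exists_pow_eq_self_of_coprime hcop
  refine ⟨(a ^ m) ^ c, .of_orderOf_dvd_pow (n := e) hp (orderOf_dvd_of_pow_eq_one ?_),
    by rw [map_pow, map_pow, hc]⟩
  rw [← pow_mul, ← pow_mul, show m * (c * p ^ e) = orderOf a * c by rw [hem]; ring, pow_mul,
    pow_orderOf_eq_one, one_pow]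

end PElement

section FiniteGroup

variable {Q : Type*} [Group Q] [Finite Q]

lemma closure_isPElement_eq_top :
    Subgroup.closure {x : Q | ∃ p, p.Prime ∧ IsPElement p x} = ⊤ := by
  rw [← Subgroup.index_eq_one, Nat.eq_one_iff_not_exists_prime_dvd]
  intro p hp hdvd
  have := Fact.mk hp
  obtain ⟨P⟩ : Nonempty (Sylow p Q) := inferInstance
  exact P.not_dvd_index (hdvd.trans (Subgroup.index_dvd_of_le fun x hx =>
    Subgroup.subset_closure ⟨p, hp, P.isPGroup'.isPElement hx⟩))

/-- The vanishing of left-normed commutators of `p`-elements makes the subgroup they generate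
nilpotent, so its Sylow `p`-subgroup is normal and consists of all `p`-elements of `Q`. -/
lemma exists_subgroup_mem_iff_isPElement {p k : ℕ} (hp : p.Prime)
    (h : ∀ x : Fin (k + 1) → Q, (∀ i, IsPElement p (x i)) → lnc (List.ofFn x) = 1) :
    ∃ T : Subgroup Q, ∀ x, x ∈ T ↔ IsPElement p x := by
  have := Fact.mk hp
  set K := Subgroup.closure {x : Q | IsPElement p x}
  have : Group.IsNilpotent K := by
    refine Subgroup.nilpotent_iff_lowerCentralSeries.mpr ⟨k, ?_⟩
    refine lowerCentralSeries_eq_bot_of_lnc_eq_one Subgroup.closure_closure_coe_preimage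
      fun x hx => K.subtype_injective ?_
    rw [map_lnc_ofFn, map_one]
    exact h _ hx
  obtain ⟨P⟩ : Nonempty (Sylow p K) := inferInstance
  have := Sylow.unique_of_normal P inferInstance
  refine ⟨(P : Subgroup K).map K.subtype, fun x => ⟨?_, fun hx => ?_⟩⟩
  · rintro ⟨y, hy, rfl⟩
    exact Subgroup.isPElement_coe.mpr (P.isPGroup'.isPElement hy)
  · set y : K := ⟨x, Subgroup.subset_closure hx⟩
    obtain ⟨n, hn⟩ := Subgroup.isPElement_coe.mp (show IsPElement p (y : Q) from hx)
    obtain ⟨P', hP'⟩ := (IsPGroup.of_card ((Nat.card_zpowers y).trans hn)).exists_le_sylow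
    exact ⟨y, Subsingleton.elim P' P ▸ hP' (Subgroup.mem_zpowers y), rfl⟩

theorem lowerCentralSeries_eq_bot_of_lnc_isPElement_eq_one {k : ℕ}
    (h : ∀ p, p.Prime → ∀ x : Fin (k + 1) → Q, (∀ i, IsPElement p (x i)) →
      lnc (List.ofFn x) = 1) :
    (⊤ : Subgroup Q).lowerCentralSeries k = ⊥ := by
  choose T hT using fun p : Nat.Primes => exists_subgroup_mem_iff_isPElement p.2 (h p p.2)
  have normal (p : Nat.Primes) : (T p).Normal :=
    ⟨fun x hx g => (hT p _).mpr (((hT p x).mp hx).conj g)⟩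
  have isPGroup (p : Nat.Primes) : IsPGroup p (T p) := by
    have := Fact.mk p.2
    exact IsPGroup.iff_orderOf.mpr fun y => Subgroup.isPElement_coe.mp ((hT p y).mp y.2)
  have commute : Pairwise fun p q => ∀ a ∈ T p, ∀ b ∈ T q, Commute a b := by
    intro p q hpq a ha b hb
    have := Fact.mk p.2
    have := Fact.mk q.2
    exact Subgroup.commute_of_normal_of_disjoint _ _ (normal p) (normal q)
      (IsPGroup.disjoint_of_ne p q (Subtype.coe_injective.ne hpq) _ _ (isPGroup p) (isPGroup q))
      a b ha hb
  refine lowerCentralSeries_eq_bot_of_lnc_eq_one closure_isPElement_eq_top fun x hx => ?_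
  choose r hr using hx
  rcases lnc_ofFn_eq_one_or_forall_mem T commute (fun i => ⟨r i, (hr i).1⟩) x
    (fun i => (hT _ _).mpr (hr i).2) with h1 | hall
  · exact h1
  · exact h (r 0) (hr 0).1 x fun i => (hT _ _).mp (hall i)

end FiniteGroup

lemma Subgroup.normal_closure_of_conj_mem {G : Type*} [Group G] {s : Set G}
    (h : ∀ g x, x ∈ s → g * x * g⁻¹ ∈ s) : (Subgroup.closure s).Normal := by
  have hs : Group.conjugatesOfSet s = s := by
    refine Set.Subset.antisymm (fun x hx => ?_) Group.subset_conjugatesOfSet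
    obtain ⟨a, ha, hax⟩ := Group.mem_conjugatesOfSet_iff.mp hx
    obtain ⟨g, rfl⟩ := isConj_iff.mp hax
    exact h g a ha
  rw [← hs]
  exact Subgroup.normalClosure_normal

lemma QuotientGroup.orderOf_mk'_dvd_of_le {G : Type*} [Group G] {N N' : Subgroup G} [N.Normal]
    [N'.Normal] (h : N ≤ N') (x : G) :
    orderOf (QuotientGroup.mk' N' x) ∣ orderOf (QuotientGroup.mk' N x) := by
  refine orderOf_dvd_of_pow_eq_one ?_
  rw [← map_pow, QuotientGroup.mk'_apply, QuotientGroup.eq_one_iff]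
  apply h
  rw [← QuotientGroup.eq_one_iff, ← QuotientGroup.mk'_apply, map_pow, pow_orderOf_eq_one]

section Profinite

variable {G : Type*} [Group G] [TopologicalSpace G]

lemma mem_primesOf_iff {x : G} {p : ℕ} :
    p ∈ primesOf x ↔
      p.Prime ∧ ∃ N : OpenNormalSubgroup G, p ∣ orderOf (QuotientGroup.mk' (N : Subgroup G) x) :=
  ⟨fun ⟨hp, N, hN, hNo, h⟩ => ⟨hp, ⟨⟨N, hNo⟩, hN⟩, h⟩,
    fun ⟨hp, N, h⟩ => ⟨hp, N, N.isNormal', N.isOpen', h⟩⟩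

lemma primesOf_conj (g x : G) : primesOf (g * x * g⁻¹) = primesOf x := by
  ext p
  simp only [mem_primesOf_iff, map_mul, map_inv, orderOf_conj]

lemma IsUniformCommutator.conj {k : ℕ} {u : G} (hu : IsUniformCommutator k u) (g : G) :
    IsUniformCommutator k (g * u * g⁻¹) := by
  obtain ⟨x, hx, rfl⟩ := hu
  refine ⟨fun i => g * x i * g⁻¹, fun i j => by simp only [primesOf_conj, hx i j], ?_⟩
  simpa [Function.comp_def] using map_lnc_ofFn (MulAut.conj g).toMonoidHom x

lemma closure_isUniformCommutator_normal (k : ℕ) :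
    (Subgroup.closure {g : G | IsUniformCommutator k g}).Normal :=
  Subgroup.normal_closure_of_conj_mem fun g _ hu => hu.conj g

variable [IsTopologicalGroup G] [CompactSpace G]

/-- By compactness, `x` can be taken in the intersection of the closed sets of lifts of `y` whose
image in `G ⧸ N` is a `p`-element, `N` ranging over the open normal subgroups. -/
lemma exists_mk'_eq_primesOf_eq_singleton (M : OpenNormalSubgroup G) {p : ℕ} (hp : p.Prime)
    {y : G ⧸ (M : Subgroup G)} (hy1 : y ≠ 1) (hy : IsPElement p y) :
    ∃ x, QuotientGroup.mk' _ x = y ∧ primesOf x = {p} := by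
  let Z (N : OpenNormalSubgroup G) : Set G :=
    {x | QuotientGroup.mk' _ x = y ∧ IsPElement p (QuotientGroup.mk' (N : Subgroup G) x)}
  have mono : Monotone Z := fun N₁ N₂ h x hx =>
    ⟨hx.1, hx.2.of_orderOf_dvd hp (QuotientGroup.orderOf_mk'_dvd_of_le (fun _ hg => h hg) x)⟩
  have closed (N : OpenNormalSubgroup G) : IsClosed (Z N) := by
    have := QuotientGroup.discreteTopology M.toOpenSubgroup.isOpen
    have := QuotientGroup.discreteTopology N.toOpenSubgroup.isOpen
    exact ((isClosed_discrete {y}).preimage QuotientGroup.continuous_mk).inter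
      ((isClosed_discrete {z | IsPElement p z}).preimage QuotientGroup.continuous_mk)
  have nonempty (N : OpenNormalSubgroup G) : (Z N).Nonempty := by
    obtain ⟨x₀, rfl⟩ := QuotientGroup.mk'_surjective _ y
    let f := QuotientGroup.map ((N ⊓ M : OpenNormalSubgroup G) : Subgroup G) (M : Subgroup G)
      (MonoidHom.id G) fun _ hx => hx.2
    obtain ⟨b, hb, hfb⟩ := exists_isPElement_map_eq hp f (isOfFinOrder_of_finite
      (QuotientGroup.mk' _ x₀)) hy
    obtain ⟨x, rfl⟩ := QuotientGroup.mk'_surjective _ b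
    exact ⟨x, hfb, hb.of_orderOf_dvd hp (QuotientGroup.orderOf_mk'_dvd_of_le inf_le_left x)⟩
  have : Nonempty (OpenNormalSubgroup G) := ⟨M⟩
  obtain ⟨x, hx⟩ := IsCompact.nonempty_iInter_of_directed_nonempty_isCompact_isClosed Z
    mono.directed_ge nonempty (fun N => (closed N).isCompact) closed
  rw [Set.mem_iInter] at hx
  refine ⟨x, (hx M).1, Set.eq_singleton_iff_unique_mem.mpr ⟨?_, ?_⟩⟩
  · obtain ⟨n, hn⟩ := hy
    have hn0 : n ≠ 0 := by rintro rfl; exact hy1 (orderOf_eq_one_iff.mp hn)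
    exact mem_primesOf_iff.mpr ⟨hp, M, by rw [(hx M).1, hn]; exact dvd_pow_self p hn0⟩
  · intro q hq
    obtain ⟨hq, N, hqN⟩ := mem_primesOf_iff.mp hq
    obtain ⟨n, hn⟩ := (hx N).2
    exact (Nat.prime_dvd_prime_iff_eq hq hp).mp (hq.dvd_of_dvd_pow (hn ▸ hqN))

lemma lowerCentralSeries_le_of_isUniformCommutator_mem {n : ℕ} (M : OpenNormalSubgroup G)
    (hM : ∀ g, IsUniformCommutator (n + 1) g → g ∈ M) :
    (⊤ : Subgroup G).lowerCentralSeries n ≤ M := by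
  refine Subgroup.lowerCentralSeries_le_of_quotient_eq_bot _
    (lowerCentralSeries_eq_bot_of_lnc_isPElement_eq_one fun p hp y hy => ?_)
  by_cases hy1 : ∃ i, y i = 1
  · obtain ⟨i, hi⟩ := hy1
    exact lnc_ofFn_eq_one_of_eq_one y hi
  push Not at hy1
  choose x hxy hx using fun i => exists_mk'_eq_primesOf_eq_singleton M hp (hy1 i) (hy i)
  rw [show y = QuotientGroup.mk' _ ∘ x from funext fun i => (hxy i).symm, ← map_lnc_ofFn,
    QuotientGroup.mk'_apply, QuotientGroup.eq_one_iff]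
  exact hM _ ⟨x, fun i j => by rw [hx i, hx j], rfl⟩

lemma Subgroup.le_topologicalClosure_of_forall_openNormalSubgroup [TotallyDisconnectedSpace G]
    {A H : Subgroup G} [H.Normal] (h : ∀ N : OpenNormalSubgroup G, H ≤ N → A ≤ N) :
    A ≤ H.topologicalClosure := by
  refine (le_sInf fun N hN => ?_).trans (ProfiniteGrp.closedSubgroup_eq_sInf_open
    ⟨H.topologicalClosure, H.isClosed_topologicalClosure⟩).ge
  obtain ⟨hNo, hHN⟩ := hN
  have := N.quotient_finite_of_isOpen hNo
  have : N.FiniteIndex := Subgroup.finiteIndex_of_finite_quotient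
  let M : OpenNormalSubgroup G :=
    { toSubgroup := N.normalCore
      isOpen' := N.normalCore.isOpen_of_isClosed_of_finiteIndex
        (N.normalCore_isClosed (OpenSubgroup.isClosed ⟨N, hNo⟩)) }
  exact (h M (Subgroup.normal_le_normalCore.mpr (H.le_topologicalClosure.trans hHN))).trans
    N.normalCore_le

end Profinite

theorem stmt5_general {G : Type*} [Group G] [TopologicalSpace G] [IsTopologicalGroup G]
    [CompactSpace G] [TotallyDisconnectedSpace G]
    (k : ℕ) (hk : 1 ≤ k) :
    (Subgroup.closure {g : G | IsUniformCommutator k g}).topologicalClosure =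
      (Subgroup.lowerCentralSeries (⊤ : Subgroup G) (k - 1)).topologicalClosure := by
  obtain ⟨n, rfl⟩ : ∃ n, k = n + 1 := ⟨k - 1, by omega⟩
  rw [Nat.add_sub_cancel]
  have := closure_isUniformCommutator_normal (G := G) (n + 1)
  refine le_antisymm (Subgroup.topologicalClosure_mono ?_) (Subgroup.topologicalClosure_minimal _
    (Subgroup.le_topologicalClosure_of_forall_openNormalSubgroup fun N hN => ?_)
    (Subgroup.isClosed_topologicalClosure _))
  · rw [Subgroup.closure_le]
    rintro _ ⟨x, -, rfl⟩
    exact lnc_ofFn_mem_lowerCentralSeries x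
  · exact lowerCentralSeries_le_of_isUniformCommutator_mem N fun g hg =>
      hN (Subgroup.subset_closure hg)

theorem stmt5 {G : Type*} [Group G] [TopologicalSpace G] [IsTopologicalGroup G]
    [CompactSpace G] [T2Space G] [TotallyDisconnectedSpace G]
    (k : ℕ) (hk : 1 ≤ k) :
    (Subgroup.closure {g : G | IsUniformCommutator k g}).topologicalClosure =
      (Subgroup.lowerCentralSeries (⊤ : Subgroup G) (k - 1)).topologicalClosure :=
  stmt5_general k hk
end

section
/- Let φ be a coprime automorphism of a pronilpotent group G and let k be a positive integer. Then the set of elements of the form [g,φ] = g⁻¹·φ(g) with g ∈ G coincides with the set of elements of the form [g,_k φ] with g ∈ G, where [g,_1 φ] = [g,φ] and [g,_{j+1} φ] = [[g,_j φ], φ]. -/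
def nilpQuot {G : Type*} [Group G] (N : Subgroup G) [N.Normal] : Prop :=
  Group.IsNilpotent (G ⧸ N)

/-- A topological group is pronilpotent if all its quotients by open normal
subgroups are nilpotent. -/
def IsPronilpotent (G : Type*) [Group G] [TopologicalSpace G] : Prop :=
  ∀ (N : Subgroup G) (hN : N.Normal), IsOpen (N : Set G) → @nilpQuot G _ N hN

/-- `engel g a n = [g, a, a, …, a]` (`n` copies of `a`). -/
def engel {G : Type*} [Group G] (g a : G) : ℕ → G
  | 0 => g
  | n + 1 => pcomm (engel g a n) a

/-!
Let `α` be an automorphism of a nilpotent group `G` with `α ^ n = 1` and `n` coprime to `|G|`,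
and put `N(x) = x · α x ⋯ α^(n-1) x`. Every commutator `[g, α] = g⁻¹ · α g` satisfies
`N([g, α]) = 1` (the product telescopes), and conversely every `x` with `N(x) = 1` is a double
commutator `[[h, α], α]`. For abelian `G` this holds because `y ^ n ≡ N(y)` modulo `[G, α]`, `N(y)`
is fixed by `α`, and `n`-th powers are bijective; it passes from `G ⧸ Z(G)` and `Z(G)` to `G`
because the central correction `z` in `x = [[h, α], α] · z` again has `N(z) = 1`.
Hence `[g, α] = [[h, α], α]`, and iterating gives `[g, α] = [h, α, …, α]`.

In the profinite case, conjugation by `a` acts coprimely on the nilpotent image of `N` in each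
finite quotient `W ⧸ U`, so the sets `{h ∈ N | [[h, a], a] ≡ [g, a] mod U}` are nonempty, closed
and directed; by compactness of `N` they have a common point, which is an exact solution.
-/

namespace MulAut

variable {G : Type*} [Group G]

def commutator (α : MulAut G) (x : G) : G := x⁻¹ * α x

def orbitProd (α : MulAut G) (x : G) : ℕ → G
  | 0 => 1
  | i + 1 => orbitProd α x i * (α ^ i) x

variable (α : MulAut G)

lemma pow_succ_apply (i : ℕ) (x : G) : (α ^ (i + 1)) x = (α ^ i) (α x) := by
  rw [pow_succ, mul_apply]

lemma pow_succ_apply' (i : ℕ) (x : G) : (α ^ (i + 1)) x = α ((α ^ i) x) := by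
  rw [pow_succ', mul_apply]

@[simp]
lemma orbitProd_one (i : ℕ) : orbitProd α 1 i = 1 := by
  induction i with
  | zero => rfl
  | succ i ih => simp [orbitProd, ih]

lemma orbitProd_succ' (x : G) (i : ℕ) : orbitProd α x (i + 1) = x * α (orbitProd α x i) := by
  induction i with
  | zero => simp [orbitProd]
  | succ i ih =>
    conv_lhs => rw [orbitProd, ih]
    rw [pow_succ_apply', mul_assoc, ← map_mul]
    rfl

lemma orbitProd_commutator (x : G) (i : ℕ) :
    orbitProd α (commutator α x) i = x⁻¹ * (α ^ i) x := by
  induction i with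
  | zero => simp [orbitProd]
  | succ i ih =>
    rw [orbitProd, ih, commutator, map_mul, map_inv, pow_succ_apply]
    group

lemma orbitProd_commutator_eq_one {n : ℕ} (hα : α ^ n = 1) (x : G) :
    orbitProd α (commutator α x) n = 1 := by
  simp [orbitProd_commutator, hα]

lemma apply_mem_center {z : G} (hz : z ∈ Subgroup.center G) : α z ∈ Subgroup.center G :=
  Subgroup.characteristic_iff_le_comap.mp inferInstance α hz

lemma orbitProd_mem_center {z : G} (hz : z ∈ Subgroup.center G) (i : ℕ) :
    orbitProd α z i ∈ Subgroup.center G := by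
  induction i with
  | zero => exact one_mem _
  | succ i ih => exact mul_mem ih (apply_mem_center _ hz)

lemma orbitProd_mul_of_mem_center (y : G) {z : G} (hz : z ∈ Subgroup.center G) (i : ℕ) :
    orbitProd α (y * z) i = orbitProd α y i * orbitProd α z i := by
  induction i with
  | zero => simp [orbitProd]
  | succ i ih =>
    have hcomm := Subgroup.mem_center_iff.mp (orbitProd_mem_center α hz i)
    simp only [orbitProd, ih, map_mul, mul_assoc, ← hcomm]

lemma commutator_mem_center {z : G} (hz : z ∈ Subgroup.center G) :
    commutator α z ∈ Subgroup.center G :=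
  mul_mem (inv_mem hz) (apply_mem_center α hz)

lemma commutator_mul_of_mem_center (y : G) {z : G} (hz : z ∈ Subgroup.center G) :
    commutator α (y * z) = commutator α y * commutator α z := by
  have hcomm := Subgroup.mem_center_iff.mp (inv_mem hz)
  calc (y * z)⁻¹ * α (y * z) = z⁻¹ * (y⁻¹ * α y) * α z := by rw [map_mul]; group
    _ = y⁻¹ * α y * (z⁻¹ * α z) := by rw [← hcomm, mul_assoc]

section Map

variable {G' : Type*} [Group G'] (φ : G →* G') {β : MulAut G'}

lemma map_pow_apply (h : ∀ x, φ (α x) = β (φ x)) (x : G) (j : ℕ) :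
    φ ((α ^ j) x) = (β ^ j) (φ x) := by
  induction j with
  | zero => rfl
  | succ j ih => rw [pow_succ_apply', h, ih, pow_succ_apply']

lemma map_orbitProd (h : ∀ x, φ (α x) = β (φ x)) (x : G) (i : ℕ) :
    φ (orbitProd α x i) = orbitProd β (φ x) i := by
  induction i with
  | zero => exact map_one φ
  | succ i ih => rw [orbitProd, map_mul, ih, map_pow_apply α φ h, orbitProd]

lemma map_commutator (h : ∀ x, φ (α x) = β (φ x)) (x : G) :
    φ (commutator α x) = commutator β (φ x) := by
  simp [commutator, h]

end Map

section CommGroup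

variable {H : Type*} [CommGroup H] (α : MulAut H)

def commutatorHom : H →* H where
  toFun := commutator α
  map_one' := by simp [commutator]
  map_mul' x y := commutator_mul_of_mem_center α x (Subgroup.mem_center_iff.2 fun g => mul_comm g y)

@[simp]
lemma commutatorHom_apply (x : H) : commutatorHom α x = commutator α x := rfl

lemma orbitProd_pow (x : H) (m i : ℕ) : orbitProd α (x ^ m) i = orbitProd α x i ^ m := by
  induction m with
  | zero => simp
  | succ m ih =>
    rw [pow_succ, orbitProd_mul_of_mem_center α _ (Subgroup.mem_center_iff.2 fun g => mul_comm g x),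
      ih, pow_succ]

lemma commutator_orbitProd (x : H) (i : ℕ) :
    commutator α (orbitProd α x i) = x⁻¹ * (α ^ i) x := by
  have h := orbitProd_succ' α x i
  rw [orbitProd] at h
  rw [commutator, eq_inv_mul_of_mul_eq h.symm, mul_left_comm, inv_mul_cancel_left]

lemma inv_pow_mul_orbitProd_mem_range (x : H) (i : ℕ) :
    (x ^ i)⁻¹ * orbitProd α x i ∈ (commutatorHom α).range := by
  induction i with
  | zero => simp [orbitProd]
  | succ i ih =>
    have h : (x ^ (i + 1))⁻¹ * orbitProd α x (i + 1) =
        (x ^ i)⁻¹ * orbitProd α x i * commutatorHom α (orbitProd α x i) := by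
      rw [commutatorHom_apply, commutator_orbitProd, orbitProd, pow_succ, mul_inv_rev]
      ac_rfl
    rw [h]
    exact mul_mem ih ⟨_, rfl⟩

theorem exists_commutator_commutator_eq_of_comm {n : ℕ} (hα : α ^ n = 1)
    (hn : n.Coprime (Nat.card H)) {x : H} (hx : orbitProd α x n = 1) :
    ∃ h, commutator α (commutator α h) = x := by
  have hpow := Nat.Coprime.pow_left_bijective hn.symm
  have hx_range : x ∈ (commutatorHom α).range := by
    obtain ⟨y, rfl⟩ := hpow.2 x
    have hy : orbitProd α y n = 1 := hpow.1 (by simpa [orbitProd_pow] using hx)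
    simpa [hy] using inv_mem (inv_pow_mul_orbitProd_mem_range α y n)
  obtain ⟨w, rfl⟩ := hx_range
  obtain ⟨z, rfl⟩ := hpow.2 w
  obtain ⟨v, hv⟩ := inv_pow_mul_orbitProd_mem_range α z n
  have hfix : commutatorHom α (orbitProd α z n) = 1 := by
    simp [commutator_orbitProd, hα]
  refine ⟨v⁻¹, ?_⟩
  calc commutator α (commutator α v⁻¹)
      = commutatorHom α (orbitProd α z n * (commutatorHom α v)⁻¹) := by
        rw [map_mul, hfix, one_mul, ← map_inv]; rfl
    _ = commutatorHom α (z ^ n) := by rw [hv]; simp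

end CommGroup

open Subgroup QuotientGroup in
open scoped IsMulCommutative in
theorem exists_commutator_commutator_eq_of_orbitProd_eq_one {G : Type*} [Group G]
    [Group.IsNilpotent G] (α : MulAut G) {n : ℕ} (hα : α ^ n = 1) (hn : n.Coprime (Nat.card G))
    {x : G} (hx : orbitProd α x n = 1) : ∃ h, commutator α (commutator α h) = x := by
  revert α n x
  refine Group.nilpotent_center_quotient_ind
    (P := fun G _ _ => ∀ (α : MulAut G) {n : ℕ}, α ^ n = 1 → n.Coprime (Nat.card G) →
      ∀ {x : G}, orbitProd α x n = 1 → ∃ h, commutator α (commutator α h) = x) G ?_ ?_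
  · intro G _ _ α n _ _ x _
    exact ⟨1, Subsingleton.elim _ _⟩
  intro G _ _ ih α n hα hn x hx
  let Z := center G
  let q : MulAut (G ⧸ Z) := QuotientGroup.congr Z Z α (characteristic_iff_map_eq.mp inferInstance α)
  have hq : ∀ y, mk' Z (α y) = q (mk' Z y) := fun y => rfl
  have hqn : q ^ n = 1 := by
    ext y
    induction y using QuotientGroup.induction_on with
    | H y => rw [← mk'_apply, ← map_pow_apply α _ hq, hα]; rfl
  obtain ⟨h, hh⟩ := ih q hqn (hn.coprime_dvd_right (card_quotient_dvd_card Z))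
    (x := mk' Z x) (by rw [← map_orbitProd α _ hq, hx, map_one])
  obtain ⟨h, rfl⟩ := mk'_surjective Z h
  rw [← map_commutator α _ hq, ← map_commutator α _ hq, mk'_apply, mk'_apply,
    QuotientGroup.eq] at hh
  set z := (commutator α (commutator α h))⁻¹ * x
  have hxz : x = commutator α (commutator α h) * z := (mul_inv_cancel_left _ _).symm
  have hz : orbitProd α z n = 1 := by
    rwa [hxz, orbitProd_mul_of_mem_center α _ hh, orbitProd_commutator_eq_one α hα, one_mul] at hx
  let β := MulAut.characteristic Z α
  have hβ : ∀ w : Z, Z.subtype (β w) = α (Z.subtype w) := fun w => rfl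
  obtain ⟨w, hw⟩ := exists_commutator_commutator_eq_of_comm β (n := n)
    (by rw [← map_pow, hα, map_one]) (hn.coprime_dvd_right (card_subgroup_dvd_card Z))
    (x := ⟨z, hh⟩) (Subtype.ext ((map_orbitProd β Z.subtype hβ _ n).trans hz))
  have hwz : commutator α (commutator α w) = z := by
    simpa [map_commutator β Z.subtype hβ] using congrArg Z.subtype hw
  refine ⟨h * w, ?_⟩
  rw [commutator_mul_of_mem_center α h w.2,
    commutator_mul_of_mem_center α _ (commutator_mem_center α w.2), hwz, hxz]

end MulAut

open MulAut

lemma map_pcomm_s6 {G H : Type*} [Group G] [Group H] (f : G →* H) (x y : G) :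
    f (pcomm x y) = pcomm (f x) (f y) := by
  simp [pcomm]

theorem Subgroup.exists_pcomm_pcomm_eq {Q : Type*} [Group Q] (M : Subgroup Q)
    [Group.IsNilpotent M] {b : Q} (hb : b ∈ Subgroup.normalizer (M : Set Q))
    (hcop : (orderOf b).Coprime (Nat.card M)) {g : Q} (hg : g ∈ M) :
    ∃ h ∈ M, pcomm (pcomm h b) b = pcomm g b := by
  -- `normalizerMonoidHom g` is `x ↦ g * x * g⁻¹`, so `α` is `x ↦ b⁻¹ * x * b`.
  let α : MulAut M := M.normalizerMonoidHom ⟨b, hb⟩⁻¹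
  have hpcomm : ∀ x : M, pcomm (x : Q) b = α.commutator x := by
    intro x
    simp [α, pcomm, MulAut.commutator, mul_assoc]
  have hαn : α ^ orderOf b = 1 := by
    have hb1 : (⟨b, hb⟩ : Subgroup.normalizer (M : Set Q)) ^ orderOf b = 1 :=
      Subtype.ext (pow_orderOf_eq_one b)
    rw [← map_pow, inv_pow, hb1, inv_one, map_one]
  obtain ⟨h, hh⟩ := exists_commutator_commutator_eq_of_orbitProd_eq_one α hαn hcop
    (orbitProd_commutator_eq_one α hαn ⟨g, hg⟩)
  refine ⟨h, h.2, ?_⟩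
  rw [hpcomm h, hpcomm, hh]
  exact (hpcomm ⟨g, hg⟩).symm

lemma IsPronilpotent.isNilpotent_range {G Q : Type*} [Group G] [TopologicalSpace G] [Group Q]
    (hG : IsPronilpotent G) (f : G →* Q) (hf : IsOpen (f.ker : Set G)) :
    Group.IsNilpotent f.range :=
  have : Group.IsNilpotent (G ⧸ f.ker) := hG f.ker inferInstance hf
  Group.nilpotent_of_surjective _ (QuotientGroup.quotientKerEquivRange f).surjective

lemma coprime_orderOf_mk_card_map {W : Type*} [Group W] [TopologicalSpace W] {N : Subgroup W}
    {a : W} (hcoprime : primesOf a ∩ ⋃ g ∈ (N : Set W), primesOf g = ∅)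
    (U : Subgroup W) [U.Normal] [Finite (W ⧸ U)] (hU : IsOpen (U : Set W)) :
    (orderOf (QuotientGroup.mk' U a)).Coprime (Nat.card (N.map (QuotientGroup.mk' U))) := by
  refine Nat.coprime_of_dvd fun p hp hpa hpM => ?_
  have := Fact.mk hp
  obtain ⟨m, hm⟩ := exists_prime_orderOf_dvd_card' p hpM
  obtain ⟨w, hw, hwm⟩ := Subgroup.mem_map.mp m.2
  have hpw : p ∈ primesOf w := ⟨hp, U, inferInstance, hU, by
    rw [pDvdOrderInQuot, hwm, Subgroup.orderOf_coe, hm]⟩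
  have : p ∈ primesOf a ∩ ⋃ g ∈ (N : Set W), primesOf g :=
    ⟨⟨hp, U, inferInstance, hU, hpa⟩, Set.mem_biUnion hw hpw⟩
  rwa [hcoprime] at this

theorem exists_pcomm_pcomm_inv_mul_pcomm_mem {W : Type*} [Group W] [TopologicalSpace W] {N : Subgroup W}
    (hN : IsPronilpotent N) {a : W} (ha : a ∈ Subgroup.normalizer (N : Set W))
    (hcoprime : primesOf a ∩ ⋃ g ∈ (N : Set W), primesOf g = ∅)
    (U : Subgroup W) [U.Normal] [Finite (W ⧸ U)] (hU : IsOpen (U : Set W)) {g : W} (hg : g ∈ N) :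
    ∃ h ∈ N, (pcomm (pcomm h a) a)⁻¹ * pcomm g a ∈ U := by
  let π := QuotientGroup.mk' U
  have hker : ((π.comp N.subtype).ker : Set N) = (↑) ⁻¹' (U : Set W) := by
    ext
    simp [π, QuotientGroup.eq_one_iff]
  have hnilp := hN.isNilpotent_range (π.comp N.subtype) (hker ▸ hU.preimage continuous_subtype_val)
  rw [MonoidHom.range_comp, Subgroup.range_subtype] at hnilp
  obtain ⟨_, ⟨h, hh, rfl⟩, he⟩ := (N.map π).exists_pcomm_pcomm_eq
    (Subgroup.le_normalizer_map π ⟨a, ha, rfl⟩) (coprime_orderOf_mk_card_map hcoprime U hU)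
    ⟨g, hg, rfl⟩
  rw [← map_pcomm_s6, ← map_pcomm_s6, ← map_pcomm_s6] at he
  exact ⟨h, hh, QuotientGroup.eq.mp he⟩

lemma exists_eq_one_of_forall_exists_mem {X W : Type*} [TopologicalSpace X] [CompactSpace X]
    [Group W] [TopologicalSpace W] [IsTopologicalGroup W] [CompactSpace W]
    [TotallyDisconnectedSpace W] {F : X → W} (hF : Continuous F)
    (h : ∀ U : OpenNormalSubgroup W, ∃ x, F x ∈ U) : ∃ x, F x = 1 := by
  have : Nonempty (OpenNormalSubgroup W) :=
    ⟨⟨⊤, by rw [OpenSubgroup.toSubgroup_top]; infer_instance⟩⟩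
  let S : OpenNormalSubgroup W → Set X := fun U => F ⁻¹' U
  have hS : ∀ U, IsClosed (S U) := fun U => U.toOpenSubgroup.isClosed.preimage hF
  obtain ⟨x, hx⟩ := IsCompact.nonempty_iInter_of_directed_nonempty_isCompact_isClosed S
    (Monotone.directed_ge fun _ _ hUV => Set.preimage_mono hUV) h (fun U => (hS U).isCompact) hS
  refine ⟨x, by_contra fun hne => ?_⟩
  obtain ⟨U, hU⟩ := ProfiniteGrp.exist_openNormalSubgroup_sub_open_nhds_of_one
    isOpen_compl_singleton (Ne.symm hne)
  exact hU (Set.mem_iInter.mp hx U) rfl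

theorem exists_pcomm_pcomm_eq_of_isPronilpotent {W : Type*} [Group W] [TopologicalSpace W]
    [IsTopologicalGroup W] [CompactSpace W] [TotallyDisconnectedSpace W]
    {N : Subgroup W} (hNclosed : IsClosed (N : Set W)) (hN : IsPronilpotent N) {a : W}
    (ha : a ∈ Subgroup.normalizer (N : Set W))
    (hcoprime : primesOf a ∩ ⋃ g ∈ (N : Set W), primesOf g = ∅) {g : W} (hg : g ∈ N) :
    ∃ h ∈ N, pcomm (pcomm h a) a = pcomm g a := by
  have : CompactSpace N := isCompact_iff_compactSpace.mp hNclosed.isCompact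
  let F : N → W := fun h => (pcomm (pcomm (h : W) a) a)⁻¹ * pcomm g a
  have hF_mem : ∀ U : OpenNormalSubgroup W, ∃ h, F h ∈ U := fun U => by
    obtain ⟨h, hhN, he⟩ := exists_pcomm_pcomm_inv_mul_pcomm_mem hN ha hcoprime U U.isOpen hg
    exact ⟨⟨h, hhN⟩, he⟩
  obtain ⟨h, hh⟩ := exists_eq_one_of_forall_exists_mem (by unfold F pcomm; fun_prop) hF_mem
  exact ⟨h, h.2, inv_mul_eq_one.mp hh⟩

lemma setOf_pcomm_eq_setOf_engel {G : Type*} [Group G] {N : Subgroup G} {a : G}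
    (ha : a ∈ Subgroup.normalizer (N : Set G))
    (hkey : ∀ g ∈ N, ∃ h ∈ N, pcomm (pcomm h a) a = pcomm g a) {k : ℕ} (hk : 1 ≤ k) :
    {x : G | ∃ g ∈ N, x = pcomm g a} = {x : G | ∃ g ∈ N, x = engel g a k} := by
  have pcomm_mem : ∀ g ∈ N, pcomm g a ∈ N := fun g hg => by
    rw [show pcomm g a = g⁻¹ * (a⁻¹ * g * a) by simp [pcomm, mul_assoc]]
    exact mul_mem (inv_mem hg) ((Subgroup.mem_normalizer_iff''.mp ha g).mp hg)
  have engel_mem : ∀ j, ∀ g ∈ N, engel g a j ∈ N := fun j => by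
    induction j with
    | zero => exact fun g hg => hg
    | succ j ih => exact fun g hg => pcomm_mem _ (ih g hg)
  have pcomm_eq_engel : ∀ j, ∀ g ∈ N, ∃ h ∈ N, engel h a (j + 1) = pcomm g a := fun j => by
    induction j with
    | zero => exact fun g hg => ⟨g, hg, rfl⟩
    | succ j ih =>
      intro g hg
      obtain ⟨h₀, hh₀, he₀⟩ := hkey g hg
      obtain ⟨h, hh, he⟩ := ih h₀ hh₀
      exact ⟨h, hh, by rw [engel, he, he₀]⟩
  obtain ⟨j, rfl⟩ : ∃ j, k = j + 1 := ⟨k - 1, by omega⟩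
  ext x
  constructor
  · rintro ⟨g, hg, rfl⟩
    obtain ⟨h, hh, he⟩ := pcomm_eq_engel j g hg
    exact ⟨h, hh, he.symm⟩
  · rintro ⟨g, hg, rfl⟩
    exact ⟨engel g a j, engel_mem j g hg, rfl⟩

theorem stmt6_general {W : Type*} [Group W] [TopologicalSpace W] [IsTopologicalGroup W]
    [CompactSpace W] [TotallyDisconnectedSpace W]
    (N : Subgroup W) (hNclosed : IsClosed (N : Set W))
    (hNpronilp : IsPronilpotent ↥N)
    (a : W) (ha : a ∈ Subgroup.normalizer (N : Set W))
    (hcoprime : primesOf a ∩ ⋃ g ∈ (N : Set W), primesOf g = ∅)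
    (k : ℕ) (hk : 1 ≤ k) :
    {x : W | ∃ g ∈ N, x = pcomm g a} = {x : W | ∃ g ∈ N, x = engel g a k} :=
  setOf_pcomm_eq_setOf_engel ha
    (fun _ hg => exists_pcomm_pcomm_eq_of_isPronilpotent hNclosed hNpronilp ha hcoprime hg) hk

theorem stmt6 {W : Type*} [Group W] [TopologicalSpace W] [IsTopologicalGroup W]
    [CompactSpace W] [T2Space W] [TotallyDisconnectedSpace W]
    (N : Subgroup W) (hNclosed : IsClosed (N : Set W))
    (hNpronilp : IsPronilpotent ↥N)
    (a : W) (ha : a ∈ Subgroup.normalizer (N : Set W))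
    (hcoprime : primesOf a ∩ ⋃ g ∈ (N : Set W), primesOf g = ∅)
    (k : ℕ) (hk : 1 ≤ k) :
    {x : W | ∃ g ∈ N, x = pcomm g a} = {x : W | ∃ g ∈ N, x = engel g a k} :=
  stmt6_general N hNclosed hNpronilp a ha hcoprime k hk
end

section
/- Let x_1, …, x_n be elements of a group G and let y ∈ {x_1, …, x_n}. Then the left-normed commutator [x_1, …, x_n] is a product of 2^{n−1} elements, each of which is a conjugate in G of y or of y⁻¹. -/
open Pointwise Group

section

variable {G : Type*} [Group G]

lemma lnc_append_singleton {l : List G} (hl : l ≠ []) (b : G) :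
    lnc (l ++ [b]) = pcomm (lnc l) b := by
  obtain ⟨a, t, rfl⟩ := List.exists_cons_of_ne_nil hl
  simp [lnc, List.foldl_append]

lemma conjugatesOfSet_inv (s : Set G) : (conjugatesOfSet s)⁻¹ = conjugatesOfSet s⁻¹ := by
  ext g
  simp only [Set.mem_inv, mem_conjugatesOfSet_iff, isConj_iff]
  constructor
  · rintro ⟨a, ha, c, hc⟩
    exact ⟨a⁻¹, by simpa using ha, c, by rw [← conj_inv, hc, inv_inv]⟩
  · rintro ⟨a, ha, c, rfl⟩
    exact ⟨a⁻¹, ha, c, conj_inv.symm⟩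

lemma conj_mem_pow_conjugatesOfSet {s : Set G} {n : ℕ} {x : G}
    (hx : x ∈ conjugatesOfSet s ^ n) (c : G) : c * x * c⁻¹ ∈ conjugatesOfSet s ^ n := by
  have hconj : MulAut.conj c '' conjugatesOfSet s ⊆ conjugatesOfSet s := by
    rintro _ ⟨g, hg, rfl⟩
    exact conj_mem_conjugatesOfSet hg
  rw [← MulAut.conj_apply]
  refine Set.pow_subset_pow_left hconj ?_
  rw [← Set.image_pow]
  exact Set.mem_image_of_mem _ hx

lemma conjugatesOfSet_pair_inv (y : G) :
    (conjugatesOfSet {y, y⁻¹})⁻¹ = conjugatesOfSet {y, y⁻¹} := by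
  rw [conjugatesOfSet_inv, Set.inv_insert, Set.inv_singleton, inv_inv, Set.pair_comm]

lemma inv_mem_pow_conjugatesOfSet_pair {y x : G} {n : ℕ}
    (hx : x ∈ conjugatesOfSet {y, y⁻¹} ^ n) : x⁻¹ ∈ conjugatesOfSet {y, y⁻¹} ^ n := by
  rwa [← Set.mem_inv, ← inv_pow, conjugatesOfSet_pair_inv]

lemma one_mem_sq_conjugatesOfSet_pair (y : G) : (1 : G) ∈ conjugatesOfSet {y, y⁻¹} ^ 2 := by
  rw [pow_two, ← mul_inv_cancel y]
  exact Set.mul_mem_mul (subset_conjugatesOfSet (by simp)) (subset_conjugatesOfSet (by simp))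

lemma pcomm_mem_pow_of_mem {y L : G} {k : ℕ} (hL : L ∈ conjugatesOfSet {y, y⁻¹} ^ k) (b : G) :
    pcomm L b ∈ conjugatesOfSet {y, y⁻¹} ^ (2 * k) := by
  have hconj := conj_mem_pow_conjugatesOfSet hL b⁻¹
  rw [inv_inv] at hconj
  rw [two_mul, pow_add, show pcomm L b = L⁻¹ * (b⁻¹ * L * b) by simp only [pcomm, mul_assoc]]
  exact Set.mul_mem_mul (inv_mem_pow_conjugatesOfSet_pair hL) hconj

lemma pcomm_mem_pow_self (L y : G) {k : ℕ} (hk : k ≠ 0) :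
    pcomm L y ∈ conjugatesOfSet {y, y⁻¹} ^ (2 * k) := by
  have hfirst : L⁻¹ * y⁻¹ * L ∈ conjugatesOfSet {y, y⁻¹} := by
    simpa using conj_mem_conjugatesOfSet (c := L⁻¹) (subset_conjugatesOfSet (by simp))
  have hsq : pcomm L y ∈ conjugatesOfSet {y, y⁻¹} ^ 2 := by
    rw [pow_two]
    exact Set.mul_mem_mul hfirst (subset_conjugatesOfSet (by simp))
  rw [pow_mul]
  exact Set.subset_pow (one_mem_sq_conjugatesOfSet_pair y) hk hsq

lemma lnc_mem_pow_conjugatesOfSet {y : G} {l : List G} (hy : y ∈ l) :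
    lnc l ∈ conjugatesOfSet {y, y⁻¹} ^ 2 ^ (l.length - 1) := by
  induction l using List.reverseRecOn with
  | nil => simp at hy
  | append_singleton l b ih =>
    rcases eq_or_ne l [] with rfl | hl
    · obtain rfl : y = b := by simpa using hy
      simpa [lnc] using subset_conjugatesOfSet (by simp)
    have hlen : 2 ^ ((l ++ [b]).length - 1) = 2 * 2 ^ (l.length - 1) := by
      rw [← pow_succ']
      simp [Nat.sub_add_cancel (List.length_pos_iff.2 hl)]
    rw [lnc_append_singleton hl, hlen]
    rcases List.mem_append.1 hy with hy | hy
    · exact pcomm_mem_pow_of_mem (ih hy) b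
    · obtain rfl : y = b := by simpa using hy
      exact pcomm_mem_pow_self _ y (by positivity)

lemma exists_conj_of_mem_conjugatesOfSet_pair {y g : G} (hg : g ∈ conjugatesOfSet {y, y⁻¹}) :
    ∃ h : G, g = h⁻¹ * y * h ∨ g = h⁻¹ * y⁻¹ * h := by
  obtain ⟨a, ha, hconj⟩ := mem_conjugatesOfSet_iff.1 hg
  obtain ⟨c, rfl⟩ := isConj_iff.1 hconj
  refine ⟨c⁻¹, ?_⟩
  rcases ha with rfl | rfl <;> simp
end

theorem stmt11_general {G : Type*} [Group G] (n : ℕ) (x : Fin n → G)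
    (y : G) (hy : y ∈ Set.range x) :
    ∃ c : Fin (2 ^ (n - 1)) → G,
      (∀ i, ∃ h : G, c i = h⁻¹ * y * h ∨ c i = h⁻¹ * y⁻¹ * h) ∧
      lnc (List.ofFn x) = (List.ofFn c).prod := by
  have hmem := lnc_mem_pow_conjugatesOfSet ((List.mem_ofFn' x y).2 hy)
  rw [List.length_ofFn, Set.mem_pow] at hmem
  obtain ⟨f, hf⟩ := hmem
  exact ⟨fun i => f i, fun i => exists_conj_of_mem_conjugatesOfSet_pair (f i).2, hf.symm⟩

theorem stmt11 {G : Type*} [Group G] (n : ℕ) (hn : 1 ≤ n) (x : Fin n → G)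
    (y : G) (hy : y ∈ Set.range x) :
    ∃ c : Fin (2 ^ (n - 1)) → G,
      (∀ i, ∃ h : G, c i = h⁻¹ * y * h ∨ c i = h⁻¹ * y⁻¹ * h) ∧
      lnc (List.ofFn x) = (List.ofFn c).prod :=
  stmt11_general n x y hy
end

section
/- Let G be a profinite group and let H be a locally finite normal abstract (not necessarily closed) subgroup of G, with topological closure Ĥ. Suppose that a ∈ G is an element of finite order such that C_H(a) = 1. Then the centralizer of the image of a in G/Ĥ equals the image of C_G(a) in G/Ĥ; that is, C_{G/Ĥ}(aĤ) = C_G(a)Ĥ/Ĥ. -/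
/-!
For a finite subgroup `M` normalised by `a` with `C_M(a) = 1`, the map `k ↦ a⁻¹ * (k * a * k⁻¹)`
is injective on `M`, hence onto: every element of the coset `a * M` is `M`-conjugate to `a`.
Local finiteness puts every `g ∈ H` into such an `M`, so the same holds for `H`, and by
compactness for `Ĥ`: the image of the compact set `Ĥ` under that continuous map is closed and
contains `H`. If now `x` centralises `a` modulo `Ĥ`, write `x⁻¹ * a * x = k * a * k⁻¹` with
`k ∈ Ĥ`; then `x * k ∈ C_G(a)`.
-/

namespace Subgroup

variable {G : Type*} [Group G]

def IsLocallyFinite (H : Subgroup G) : Prop :=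
  ∀ s : Finset G, (s : Set G) ⊆ H → ∃ K : Subgroup G, K ≤ H ∧ (K : Set G).Finite ∧ (s : Set G) ⊆ K

theorem exists_conj_eq_mul_of_finite (M : Subgroup G) [Finite M] {a : G}
    (hM : ∀ m ∈ M, a⁻¹ * m * a ∈ M) (hC : ∀ m ∈ M, a * m = m * a → m = 1) :
    ∀ g ∈ M, ∃ k ∈ M, k * a * k⁻¹ = a * g := by
  let f : M → M := fun k => ⟨a⁻¹ * (k * a * (k : G)⁻¹), by
    simpa only [mul_assoc] using M.mul_mem (hM k k.2) (M.inv_mem k.2)⟩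
  have hf : Function.Injective f := by
    intro k₁ k₂ h
    have h' : (k₁ : G) * a * (k₁ : G)⁻¹ = k₂ * a * (k₂ : G)⁻¹ :=
      mul_left_cancel (congrArg Subtype.val h)
    have hcomm : a * ((k₂ : G)⁻¹ * k₁) = ((k₂ : G)⁻¹ * k₁) * a :=
      calc a * ((k₂ : G)⁻¹ * k₁) = (k₂ : G)⁻¹ * (k₂ * a * (k₂ : G)⁻¹) * k₁ := by group
        _ = (k₂ : G)⁻¹ * (k₁ * a * (k₁ : G)⁻¹) * k₁ := by rw [h']
        _ = ((k₂ : G)⁻¹ * k₁) * a := by group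
    have := hC _ (M.mul_mem (M.inv_mem k₂.2) k₁.2) hcomm
    exact Subtype.ext (inv_mul_eq_one.mp this).symm
  intro g hg
  obtain ⟨k, hk⟩ := Finite.injective_iff_surjective.mp hf ⟨g, hg⟩
  have hk' : a⁻¹ * (k * a * (k : G)⁻¹) = g := congrArg Subtype.val hk
  exact ⟨k, k.2, by rw [← hk', mul_inv_cancel_left]⟩

theorem IsLocallyFinite.exists_finite_conj_invariant {H : Subgroup G} (hLF : H.IsLocallyFinite)
    [hH : H.Normal] {a : G} (ha : IsOfFinOrder a) {g : G} (hg : g ∈ H) :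
    ∃ M : Subgroup G, M ≤ H ∧ Finite M ∧ g ∈ M ∧ ∀ m ∈ M, a⁻¹ * m * a ∈ M := by
  let S : Set G := Set.range fun b : zpowers a => (b : G) * g * (b : G)⁻¹
  have hSfin : S.Finite := have := ha.finite_zpowers.to_subtype; Set.finite_range _
  have hSH : S ⊆ H := by
    rintro _ ⟨b, rfl⟩
    exact hH.conj_mem g hg b
  obtain ⟨K, hKH, hKfin, hSK⟩ := hLF hSfin.toFinset (by rwa [hSfin.coe_toFinset])
  have hMK : closure S ≤ K := (closure_le K).2 (by rwa [hSfin.coe_toFinset] at hSK)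
  have hconj : closure S ≤ (closure S).comap (MulAut.conj a⁻¹).toMonoidHom := by
    refine (closure_le _).2 ?_
    rintro _ ⟨b, rfl⟩
    refine subset_closure ⟨⟨a⁻¹ * b, mul_mem (inv_mem (mem_zpowers a)) b.2⟩, ?_⟩
    simp only [MulEquiv.coe_toMonoidHom, MulAut.conj_apply, mul_inv_rev, inv_inv, mul_assoc]
  refine ⟨closure S, hMK.trans hKH, (hKfin.subset hMK).to_subtype,
    subset_closure ⟨1, by simp⟩, fun m hm => ?_⟩
  simpa only [mem_comap, MulEquiv.coe_toMonoidHom, MulAut.conj_apply, inv_inv] using hconj hm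

theorem IsLocallyFinite.exists_conj_eq_mul {H : Subgroup G} (hLF : H.IsLocallyFinite)
    [H.Normal] {a : G} (ha : IsOfFinOrder a) (hC : ∀ h ∈ H, a * h = h * a → h = 1) :
    ∀ g ∈ H, ∃ k ∈ H, k * a * k⁻¹ = a * g := by
  intro g hg
  obtain ⟨M, hMH, hMfin, hgM, hM⟩ := hLF.exists_finite_conj_invariant ha hg
  obtain ⟨k, hkM, hk⟩ :=
    exists_conj_eq_mul_of_finite M hM (fun m hm => hC m (hMH hm)) g hgM
  exact ⟨k, hMH hkM, hk⟩

theorem exists_conj_eq_mul_of_mem_topologicalClosure [TopologicalSpace G] [IsTopologicalGroup G]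
    [CompactSpace G] [T2Space G] {H : Subgroup G} {a : G}
    (hH : ∀ g ∈ H, ∃ k ∈ H, k * a * k⁻¹ = a * g) :
    ∀ g ∈ H.topologicalClosure, ∃ k ∈ H.topologicalClosure, k * a * k⁻¹ = a * g := by
  let f : G → G := fun k => a⁻¹ * (k * a * k⁻¹)
  have hclosed : IsClosed (f '' H.topologicalClosure) :=
    ((H.isClosed_topologicalClosure.isCompact).image (by fun_prop)).isClosed
  have hsub : (H : Set G) ⊆ f '' H.topologicalClosure := by
    intro g hg
    obtain ⟨k, hkH, hk⟩ := hH g hg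
    exact ⟨k, H.le_topologicalClosure hkH, by simp only [f, hk, inv_mul_cancel_left]⟩
  intro g hg
  obtain ⟨k, hk, hfk⟩ := closure_minimal hsub hclosed (hg : g ∈ _root_.closure (H : Set G))
  exact ⟨k, hk, by rw [← hfk, mul_inv_cancel_left]⟩

theorem commutes_mod_iff_exists_commute_of_conj_eq_mul {N : Subgroup G} [hN : N.Normal] {a : G}
    (hconj : ∀ g ∈ N, ∃ k ∈ N, k * a * k⁻¹ = a * g) (x : G) :
    (x * a)⁻¹ * (a * x) ∈ N ↔ ∃ c : G, c * a = a * c ∧ c⁻¹ * x ∈ N := by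
  constructor
  · intro hx
    obtain ⟨k, hkN, hk⟩ := hconj _ hx
    refine ⟨x * k, ?_, by simpa [mul_assoc] using N.inv_mem hkN⟩
    calc x * k * a = x * (k * a * k⁻¹) * k := by group
      _ = a * (x * k) := by rw [hk]; group
  · rintro ⟨c, hc, hn⟩
    have hca : c⁻¹ * a * c = a := by rw [mul_assoc, ← hc, inv_mul_cancel_left]
    have : (x * a)⁻¹ * (a * x) = (a⁻¹ * (c⁻¹ * x)⁻¹ * a) * (c⁻¹ * x) :=
      calc (x * a)⁻¹ * (a * x) = a⁻¹ * (c⁻¹ * x)⁻¹ * (c⁻¹ * a * c) * (c⁻¹ * x) := by group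
        _ = (a⁻¹ * (c⁻¹ * x)⁻¹ * a) * (c⁻¹ * x) := by rw [hca]
    rw [this]
    exact N.mul_mem (by simpa using hN.conj_mem _ (N.inv_mem hn) a⁻¹) hn

end Subgroup

theorem stmt18_general {G : Type*} [Group G] [TopologicalSpace G] [IsTopologicalGroup G]
    [CompactSpace G] [T2Space G]
    (H : Subgroup G) (hHnormal : H.Normal)
    (hLF : ∀ s : Finset G, (↑s : Set G) ⊆ (H : Set G) →
      ∃ K : Subgroup G, K ≤ H ∧ (K : Set G).Finite ∧ (↑s : Set G) ⊆ (K : Set G))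
    (a : G) (ha : IsOfFinOrder a)
    (hC : ∀ h ∈ H, a * h = h * a → h = 1) :
    -- The centralizer of the image of `a` in `G ⧸ H.topologicalClosure` is the
    -- image of `C_G(a)`: the coset of `x` commutes with the coset of `a` iff
    -- `x` lies in the same coset as some element of `C_G(a)`.
    ∀ x : G, (x * a)⁻¹ * (a * x) ∈ H.topologicalClosure ↔
      ∃ c : G, c * a = a * c ∧ c⁻¹ * x ∈ H.topologicalClosure := by
  have hconj : ∀ g ∈ H, ∃ k ∈ H, k * a * k⁻¹ = a * g :=
    Subgroup.IsLocallyFinite.exists_conj_eq_mul hLF ha hC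
  have := Subgroup.is_normal_topologicalClosure H
  exact Subgroup.commutes_mod_iff_exists_commute_of_conj_eq_mul
    (Subgroup.exists_conj_eq_mul_of_mem_topologicalClosure hconj)

theorem stmt18 {G : Type*} [Group G] [TopologicalSpace G] [IsTopologicalGroup G]
    [CompactSpace G] [T2Space G] [TotallyDisconnectedSpace G]
    (H : Subgroup G) (hHnormal : H.Normal)
    (hLF : ∀ s : Finset G, (↑s : Set G) ⊆ (H : Set G) →
      ∃ K : Subgroup G, K ≤ H ∧ (K : Set G).Finite ∧ (↑s : Set G) ⊆ (K : Set G))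
    (a : G) (ha : IsOfFinOrder a)
    (hC : ∀ h ∈ H, a * h = h * a → h = 1) :
    -- The centralizer of the image of `a` in `G ⧸ H.topologicalClosure` is the
    -- image of `C_G(a)`: the coset of `x` commutes with the coset of `a` iff
    -- `x` lies in the same coset as some element of `C_G(a)`.
    ∀ x : G, (x * a)⁻¹ * (a * x) ∈ H.topologicalClosure ↔
      ∃ c : G, c * a = a * c ∧ c⁻¹ * x ∈ H.topologicalClosure :=
  stmt18_general H hHnormal hLF a ha hC
end
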